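/- arXiv:2208.08351 — 5 statements merged into one kernel-verified Lean document; each statement's English description precedes it below -/
import Mathlib

section
/- Let Q > 0, η > 0 with η ≤ Q, and let 0 = f₁ ≤ f₂ ≤ ... ≤ f_k ≤ Q - η and f_{k+1} = Q be a nondecreasing sequence of reals. Then ∑_{i=1}^{k} (f_{i+1} - f_i)/(Q - f_i) ≤ ln(Q/η) + 1. -/
/-!
Each increment is dominated by a logarithmic one: for `a ≤ b < Q`,
`(b - a) / (Q - a) ≤ log (Q - a) - log (Q - b)` (from `1 - 1/t ≤ log t`). The first `k - 1` terms
therefore telescope to at most `log Q - log (Q - f k) ≤ log (Q / η)`, and the last term is exactly `1`.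
-/

open Finset Real

lemma sub_div_le_log_sub_log {x y : ℝ} (hy : 0 < y) (hyx : y ≤ x) :
    (x - y) / x ≤ log x - log y := by
  have hx : 0 < x := hy.trans_le hyx
  have h := one_sub_inv_le_log_of_pos (div_pos hx hy)
  rwa [inv_div, log_div hx.ne' hy.ne', one_sub_div hx.ne'] at h

lemma sum_Icc_div_le_log_sub_log (Q : ℝ) (f : ℕ → ℝ) (m : ℕ)
    (hmono : ∀ i ∈ Icc 1 m, f i ≤ f (i + 1)) (hlt : f (m + 1) < Q) :
    ∑ i ∈ Icc 1 m, (f (i + 1) - f i) / (Q - f i) ≤ log (Q - f 1) - log (Q - f (m + 1)) := by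
  induction m with
  | zero => simp
  | succ m ih =>
    have hstep : f (m + 1) ≤ f (m + 2) := hmono (m + 1) (by simp)
    have ih' := ih (fun i hi => hmono i (Icc_subset_Icc_right m.le_succ hi)) (hstep.trans_lt hlt)
    have hterm : (f (m + 2) - f (m + 1)) / (Q - f (m + 1))
        ≤ log (Q - f (m + 1)) - log (Q - f (m + 2)) := by
      convert sub_div_le_log_sub_log (x := Q - f (m + 1)) (sub_pos.2 hlt) (by linarith) using 2
      ring
    rw [sum_Icc_succ_top (by omega)]
    linarith

theorem stmt_1_general (Q η : ℝ) (hQ : 0 < Q) (hη : 0 < η)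
    (k : ℕ) (hk : 1 ≤ k) (f : ℕ → ℝ) (h1 : f 1 = 0)
    (hmono : ∀ i, 1 ≤ i → i ≤ k → f i ≤ f (i + 1))
    (hklast : f k ≤ Q - η) (hlast : f (k + 1) = Q) :
    ∑ i ∈ Finset.Icc 1 k, (f (i + 1) - f i) / (Q - f i) ≤ Real.log (Q / η) + 1 := by
  obtain ⟨m, rfl⟩ : ∃ m, k = m + 1 := ⟨k - 1, by omega⟩
  have hgap : 0 < Q - f (m + 1) := by linarith
  have hhead : ∑ i ∈ Icc 1 m, (f (i + 1) - f i) / (Q - f i) ≤ log (Q / η) := by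
    calc ∑ i ∈ Icc 1 m, (f (i + 1) - f i) / (Q - f i)
        ≤ log (Q - f 1) - log (Q - f (m + 1)) :=
          sum_Icc_div_le_log_sub_log Q f m
            (fun i hi => hmono i (mem_Icc.1 hi).1 (by grind)) (by linarith)
      _ ≤ log Q - log η := by
          rw [h1, sub_zero]
          gcongr
          linarith
      _ = log (Q / η) := (log_div hQ.ne' hη.ne').symm
  have hlast_term : (f (m + 1 + 1) - f (m + 1)) / (Q - f (m + 1)) = 1 := by
    rw [hlast, div_self hgap.ne']
  rw [sum_Icc_succ_top (by omega), hlast_term]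
  linarith

/-- Harmonic-sum bound: for `0 = f 1 ≤ f 2 ≤ ... ≤ f k ≤ Q - η` and `f (k+1) = Q`,
`∑_{i=1}^{k} (f_{i+1} - f_i)/(Q - f_i) ≤ ln(Q/η) + 1`. -/
theorem stmt_1 (Q η : ℝ) (hQ : 0 < Q) (hη : 0 < η) (hηQ : η ≤ Q)
    (k : ℕ) (hk : 1 ≤ k) (f : ℕ → ℝ) (h1 : f 1 = 0)
    (hmono : ∀ i, 1 ≤ i → i ≤ k → f i ≤ f (i + 1))
    (hklast : f k ≤ Q - η) (hlast : f (k + 1) = Q) :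
    ∑ i ∈ Finset.Icc 1 k, (f (i + 1) - f i) / (Q - f i) ≤ Real.log (Q / η) + 1 :=
  stmt_1_general Q η hQ hη k hk f h1 hmono hklast hlast
end

section
/- Let a: [0,∞) → [0,1] and o: [0,∞) → [0,1] be measurable nonincreasing functions supported on a bounded interval, let p ≥ 1, L ≥ 1 and β > p. Suppose that for all i ≥ 0: L·a(i) ≥ Lβ·∫_i^∞ (a(t) − o(t/(Lβ)))/t dt. Then p·∫₀^∞ t^{p-1} a(t) dt ≤ (L^p · β^{p+1}/(β − p)) · p·∫₀^∞ t^{p-1} o(t) dt. -/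
/-!
Let `c = Lβ` and `b t = o (t / c)`. Dividing the hypothesis by `L` gives, for every `i > 0`,
`β ∫_i^∞ a/t ≤ a i + β ∫_i^∞ b/t`. Multiplying by `i^(p-1)` and integrating over `i > 0`, the
layer cake formula turns `∫_0^∞ i^(p-1) ∫_i^∞ f/t` into `(1/p) ∫_0^∞ t^(p-1) f`, so
`β A ≤ p A + β c^p O` with `A = ∫ t^(p-1) a` and `O = ∫ t^(p-1) o` (the factor `c^p` comes from
substituting `t = c y`). Solving for `A` gives the claim, as `β > p`.
-/

open MeasureTheory Set
open scoped ENNReal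

theorem integrableOn_Ioi_mul_of_norm_le {w f : ℝ → ℝ} {a T M : ℝ}
    (hw : IntegrableOn w (Ioc a T)) (hf : AEStronglyMeasurable f)
    (hfM : ∀ t, a < t → ‖f t‖ ≤ M) (hfT : ∀ t, T ≤ t → f t = 0) :
    IntegrableOn (fun t => w t * f t) (Ioi a) := by
  refine IntegrableOn.of_forall_sdiff_eq_zero (hw.mul_bdd (c := M) hf.restrict ?_)
    measurableSet_Ioi ?_
  · filter_upwards [ae_restrict_mem measurableSet_Ioc] with t ht using hfM t ht.1
  · rintro t ⟨hat, htT⟩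
    have hTt : T < t := lt_of_not_ge fun h => htT ⟨hat, h⟩
    simp [hfT t hTt.le]

theorem integrableOn_Ioi_rpow_mul {f : ℝ → ℝ} {p T M : ℝ} (hp : 0 < p)
    (hf : AEStronglyMeasurable f) (hfM : ∀ t, 0 < t → ‖f t‖ ≤ M) (hfT : ∀ t, T ≤ t → f t = 0) :
    IntegrableOn (fun t => t ^ (p - 1) * f t) (Ioi 0) :=
  integrableOn_Ioi_mul_of_norm_le (intervalIntegral.intervalIntegrable_rpow' (by linarith)).1
    hf hfM hfT

theorem integrableOn_Ioi_div {f : ℝ → ℝ} {i T M : ℝ} (hi : 0 < i)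
    (hf : AEStronglyMeasurable f) (hfM : ∀ t, 0 < t → ‖f t‖ ≤ M) (hfT : ∀ t, T ≤ t → f t = 0) :
    IntegrableOn (fun t => f t / t) (Ioi i) := by
  have hinv : IntegrableOn (fun t : ℝ => t⁻¹) (Ioc i (max i T)) :=
    (intervalIntegral.intervalIntegrable_inv (f := id)
      (fun t ht => ((uIcc_of_le (le_max_left i T) ▸ ht).1.trans_lt' hi).ne')
      continuousOn_id).1
  simpa only [div_eq_inv_mul] using integrableOn_Ioi_mul_of_norm_le hinv hf
    (fun t ht => hfM t (hi.trans ht)) (fun t ht => hfT t (le_of_max_le_right ht))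

/-- The layer cake formula for the identity function under the measure with density `g` on
`(0, ∞)`. -/
theorem ofReal_mul_lintegral_Ioi_rpow_mul_lintegral_Ioi {p : ℝ} (hp : 0 < p) {g : ℝ → ℝ≥0∞}
    (hg : Measurable g) :
    ENNReal.ofReal p * ∫⁻ s in Ioi 0, ENNReal.ofReal (s ^ (p - 1)) * ∫⁻ t in Ioi s, g t =
      ∫⁻ t in Ioi 0, ENNReal.ofReal (t ^ p) * g t := by
  set μ := (volume.restrict (Ioi (0 : ℝ))).withDensity g
  have hpos : ∀ᵐ t ∂μ, 0 < t :=
    (withDensity_absolutelyContinuous _ _).ae_le (ae_restrict_mem measurableSet_Ioi)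
  have htail : ∀ s ∈ Ioi (0 : ℝ), μ (Ici s) * ENNReal.ofReal (s ^ (p - 1)) =
      ENNReal.ofReal (s ^ (p - 1)) * ∫⁻ t in Ioi s, g t := by
    intro s hs
    rw [withDensity_apply _ measurableSet_Ici, Measure.restrict_restrict measurableSet_Ici,
      inter_eq_left.2 (Ici_subset_Ioi.2 hs), mul_comm]
    exact congrArg _ (setLIntegral_congr Ioi_ae_eq_Ici.symm)
  calc ENNReal.ofReal p * ∫⁻ s in Ioi 0, ENNReal.ofReal (s ^ (p - 1)) * ∫⁻ t in Ioi s, g t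
      = ENNReal.ofReal p * ∫⁻ s in Ioi 0, μ (Ici s) * ENNReal.ofReal (s ^ (p - 1)) := by
        rw [setLIntegral_congr_fun measurableSet_Ioi htail]
    _ = ∫⁻ t, ENNReal.ofReal (t ^ p) ∂μ :=
        (lintegral_rpow_eq_lintegral_meas_le_mul μ (hpos.mono fun t ht => ht.le)
          aemeasurable_id hp).symm
    _ = ∫⁻ t in Ioi 0, ENNReal.ofReal (t ^ p) * g t := by
        rw [lintegral_withDensity_eq_lintegral_mul _ hg (by fun_prop)]
        exact lintegral_congr fun t => mul_comm _ _

section TailInequality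

variable {f g : ℝ → ℝ} {p β : ℝ}

theorem ofReal_mul_lintegral_Ioi_rpow_mul_integral_Ioi_div (hp : 0 < p) (hf : Measurable f)
    (hf0 : ∀ t, 0 < t → 0 ≤ f t) (hfi : IntegrableOn (fun t => t ^ (p - 1) * f t) (Ioi 0))
    (hfti : ∀ i, 0 < i → IntegrableOn (fun t => f t / t) (Ioi i)) :
    ENNReal.ofReal p * ∫⁻ i in Ioi 0, ENNReal.ofReal (i ^ (p - 1) * ∫ t in Ioi i, f t / t) =
      ENNReal.ofReal (∫ t in Ioi 0, t ^ (p - 1) * f t) := by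
  have hrow : ∀ i ∈ Ioi (0 : ℝ), ENNReal.ofReal (i ^ (p - 1) * ∫ t in Ioi i, f t / t) =
      ENNReal.ofReal (i ^ (p - 1)) * ∫⁻ t in Ioi i, ENNReal.ofReal (f t / t) := by
    intro i hi
    rw [ENNReal.ofReal_mul (Real.rpow_nonneg (le_of_lt hi) _),
      ofReal_integral_eq_lintegral_ofReal (hfti i hi)]
    filter_upwards [ae_restrict_mem measurableSet_Ioi] with t ht
    exact div_nonneg (hf0 t (hi.trans ht)) (hi.trans ht).le
  have hcol : ∀ t ∈ Ioi (0 : ℝ), ENNReal.ofReal (t ^ p) * ENNReal.ofReal (f t / t) =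
      ENNReal.ofReal (t ^ (p - 1) * f t) := by
    intro t ht
    rw [← ENNReal.ofReal_mul (Real.rpow_nonneg (le_of_lt ht) _), Real.rpow_sub_one (ne_of_gt ht)]
    ring_nf
  rw [setLIntegral_congr_fun measurableSet_Ioi hrow,
    ofReal_mul_lintegral_Ioi_rpow_mul_lintegral_Ioi hp (by fun_prop : Measurable fun t =>
      ENNReal.ofReal (f t / t)),
    setLIntegral_congr_fun measurableSet_Ioi hcol, ofReal_integral_eq_lintegral_ofReal hfi]
  filter_upwards [ae_restrict_mem measurableSet_Ioi] with t ht
  exact mul_nonneg (Real.rpow_nonneg (le_of_lt ht) _) (hf0 t ht)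

theorem ofReal_rpow_mul_tail_le {i : ℝ} (hi : 0 < i) (hβ : 0 ≤ β) (hfi0 : 0 ≤ f i)
    (hg0 : ∀ t, 0 < t → 0 ≤ g t)
    (hfti : IntegrableOn (fun t => f t / t) (Ioi i))
    (hgti : IntegrableOn (fun t => g t / t) (Ioi i))
    (htail : β * ∫ t in Ioi i, (f t - g t) / t ≤ f i) :
    ENNReal.ofReal β * ENNReal.ofReal (i ^ (p - 1) * ∫ t in Ioi i, f t / t) ≤
      ENNReal.ofReal (i ^ (p - 1) * f i) +
        ENNReal.ofReal β * ENNReal.ofReal (i ^ (p - 1) * ∫ t in Ioi i, g t / t) := by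
  have hw := Real.rpow_nonneg hi.le (p - 1)
  have hG : 0 ≤ ∫ t in Ioi i, g t / t := setIntegral_nonneg measurableSet_Ioi fun t ht =>
    div_nonneg (hg0 t (hi.trans ht)) (hi.trans ht).le
  have hsplit : ∫ t in Ioi i, (f t - g t) / t =
      (∫ t in Ioi i, f t / t) - ∫ t in Ioi i, g t / t := by
    simp only [sub_div]
    exact integral_sub hfti hgti
  rw [hsplit] at htail
  rw [← ENNReal.ofReal_mul hβ, ← ENNReal.ofReal_mul hβ,
    ← ENNReal.ofReal_add (mul_nonneg hw hfi0) (mul_nonneg hβ (mul_nonneg hw hG))]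
  exact ENNReal.ofReal_le_ofReal (by nlinarith [mul_le_mul_of_nonneg_left htail hw])

theorem mul_integral_Ioi_rpow_mul_le_of_tail (hp : 0 < p) (hβ : 0 ≤ β)
    (hf : Measurable f) (hg : Measurable g)
    (hf0 : ∀ t, 0 < t → 0 ≤ f t) (hg0 : ∀ t, 0 < t → 0 ≤ g t)
    (hfi : IntegrableOn (fun t => t ^ (p - 1) * f t) (Ioi 0))
    (hgi : IntegrableOn (fun t => t ^ (p - 1) * g t) (Ioi 0))
    (hfti : ∀ i, 0 < i → IntegrableOn (fun t => f t / t) (Ioi i))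
    (hgti : ∀ i, 0 < i → IntegrableOn (fun t => g t / t) (Ioi i))
    (htail : ∀ i, 0 < i → β * ∫ t in Ioi i, (f t - g t) / t ≤ f i) :
    β * ∫ t in Ioi 0, t ^ (p - 1) * f t ≤
      p * (∫ t in Ioi 0, t ^ (p - 1) * f t) + β * ∫ t in Ioi 0, t ^ (p - 1) * g t := by
  have hA : 0 ≤ ∫ t in Ioi 0, t ^ (p - 1) * f t :=
    setIntegral_nonneg measurableSet_Ioi fun t ht =>
      mul_nonneg (Real.rpow_nonneg (le_of_lt ht) _) (hf0 t ht)
  have hB : 0 ≤ ∫ t in Ioi 0, t ^ (p - 1) * g t :=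
    setIntegral_nonneg measurableSet_Ioi fun t ht =>
      mul_nonneg (Real.rpow_nonneg (le_of_lt ht) _) (hg0 t ht)
  have hint := setLIntegral_mono' (μ := volume) measurableSet_Ioi fun i hi =>
    ofReal_rpow_mul_tail_le (p := p) hi hβ (hf0 i hi) hg0 (hfti i hi) (hgti i hi) (htail i hi)
  rw [lintegral_const_mul' _ _ ENNReal.ofReal_ne_top,
    lintegral_add_left (by fun_prop), lintegral_const_mul' _ _ ENNReal.ofReal_ne_top,
    ← ofReal_integral_eq_lintegral_ofReal hfi (by
      filter_upwards [ae_restrict_mem measurableSet_Ioi] with t ht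
      exact mul_nonneg (Real.rpow_nonneg (le_of_lt ht) _) (hf0 t ht))] at hint
  refine (ENNReal.ofReal_le_ofReal_iff
    (add_nonneg (mul_nonneg hp.le hA) (mul_nonneg hβ hB))).1 ?_
  calc ENNReal.ofReal (β * ∫ t in Ioi 0, t ^ (p - 1) * f t)
      = ENNReal.ofReal p * (ENNReal.ofReal β *
          ∫⁻ i in Ioi 0, ENNReal.ofReal (i ^ (p - 1) * ∫ t in Ioi i, f t / t)) := by
        rw [mul_left_comm, ofReal_mul_lintegral_Ioi_rpow_mul_integral_Ioi_div hp hf hf0 hfi hfti,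
          ENNReal.ofReal_mul hβ]
    _ ≤ ENNReal.ofReal p * (ENNReal.ofReal (∫ t in Ioi 0, t ^ (p - 1) * f t) + ENNReal.ofReal β *
          ∫⁻ i in Ioi 0, ENNReal.ofReal (i ^ (p - 1) * ∫ t in Ioi i, g t / t)) := by
        gcongr
    _ = ENNReal.ofReal (p * (∫ t in Ioi 0, t ^ (p - 1) * f t) +
          β * ∫ t in Ioi 0, t ^ (p - 1) * g t) := by
        rw [mul_add, mul_left_comm,
          ofReal_mul_lintegral_Ioi_rpow_mul_integral_Ioi_div hp hg hg0 hgi hgti,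
          ← ENNReal.ofReal_mul hp.le, ← ENNReal.ofReal_mul hβ,
          ← ENNReal.ofReal_add (mul_nonneg hp.le hA) (mul_nonneg hβ hB)]

end TailInequality

theorem integral_Ioi_rpow_mul_comp_div (f : ℝ → ℝ) {p c : ℝ} (hc : 0 < c) :
    ∫ t in Ioi 0, t ^ (p - 1) * f (t / c) = c ^ p * ∫ t in Ioi 0, t ^ (p - 1) * f t := by
  have h := integral_comp_mul_left_Ioi (fun t => t ^ (p - 1) * f (t / c)) 0 hc
  have hscale : ∫ t in Ioi 0, (c * t) ^ (p - 1) * f t =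
      c ^ (p - 1) * ∫ t in Ioi 0, t ^ (p - 1) * f t := by
    rw [← integral_const_mul]
    refine setIntegral_congr_fun measurableSet_Ioi fun t ht => ?_
    rw [Real.mul_rpow hc.le (le_of_lt ht), mul_assoc]
  simp only [mul_zero, smul_eq_mul, mul_div_cancel_left₀ _ hc.ne', hscale] at h
  rw [Real.rpow_sub_one hc.ne'] at h
  field_simp at h
  exact h.symm

theorem stmt_6_general (a o : ℝ → ℝ) (ha_meas : Measurable a) (ho_meas : Measurable o)
    (ha_range : ∀ t, 0 ≤ t → a t ∈ Set.Icc (0 : ℝ) 1)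
    (ho_range : ∀ t, 0 ≤ t → o t ∈ Set.Icc (0 : ℝ) 1)
    (T : ℝ) (ha_supp : ∀ t, T ≤ t → a t = 0) (ho_supp : ∀ t, T ≤ t → o t = 0)
    (p L β : ℝ) (hp : 1 ≤ p) (hL : 1 ≤ L) (hβ : p < β)
    (hkey : ∀ i : ℝ, 0 ≤ i →
      L * β * ∫ t in Set.Ioi i, (a t - o (t / (L * β))) / t ≤ L * a i) :
    p * ∫ t in Set.Ioi (0 : ℝ), t ^ (p - 1) * a t ≤
      (L ^ p * β ^ (p + 1) / (β - p)) * (p * ∫ t in Set.Ioi (0 : ℝ), t ^ (p - 1) * o t) := by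
  have hp0 : 0 < p := by linarith
  have hβ0 : 0 < β := by linarith
  have hL0 : 0 < L := by linarith
  have hc : 0 < L * β := mul_pos hL0 hβ0
  have norm_le_one : ∀ f : ℝ → ℝ, (∀ t, 0 ≤ t → f t ∈ Icc (0 : ℝ) 1) →
      ∀ t, 0 < t → ‖f t‖ ≤ 1 :=
    fun f hf t ht => by rw [Real.norm_of_nonneg (hf t ht.le).1]; exact (hf t ht.le).2
  set b : ℝ → ℝ := fun t => o (t / (L * β))
  have hb_meas : Measurable b := by fun_prop
  have hb_range : ∀ t, 0 ≤ t → b t ∈ Icc (0 : ℝ) 1 :=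
    fun t ht => ho_range _ (div_nonneg ht hc.le)
  have hb_supp : ∀ t, L * β * T ≤ t → b t = 0 :=
    fun t ht => ho_supp _ ((le_div_iff₀ hc).2 (by linarith))
  have htail : ∀ i, 0 < i → β * ∫ t in Ioi i, (a t - b t) / t ≤ a i :=
    fun i hi => le_of_mul_le_mul_left (by rw [← mul_assoc]; exact hkey i hi.le) hL0
  have key := mul_integral_Ioi_rpow_mul_le_of_tail hp0 hβ0.le ha_meas hb_meas
    (fun t ht => (ha_range t ht.le).1) (fun t ht => (hb_range t ht.le).1)
    (integrableOn_Ioi_rpow_mul hp0 ha_meas.aestronglyMeasurable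
      (norm_le_one a ha_range) ha_supp)
    (integrableOn_Ioi_rpow_mul hp0 hb_meas.aestronglyMeasurable
      (norm_le_one b hb_range) hb_supp)
    (fun i hi => integrableOn_Ioi_div hi ha_meas.aestronglyMeasurable
      (norm_le_one a ha_range) ha_supp)
    (fun i hi => integrableOn_Ioi_div hi hb_meas.aestronglyMeasurable
      (norm_le_one b hb_range) hb_supp)
    htail
  rw [integral_Ioi_rpow_mul_comp_div o hc, Real.mul_rpow hL0.le hβ0.le] at key
  rw [Real.rpow_add_one hβ0.ne', div_mul_eq_mul_div, le_div_iff₀ (sub_pos.2 hβ)]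
  nlinarith [mul_le_mul_of_nonneg_left key hp0.le]

/-- Wrap-up inequality: if the nonincreasing non-completion probabilities `a, o : [0,∞) → [0,1]`
(with bounded support) satisfy `L·a(i) ≥ Lβ·∫_i^∞ (a(t) − o(t/(Lβ)))/t dt` for all `i ≥ 0`, then
`p·∫₀^∞ t^{p-1} a(t) dt ≤ (L^p β^{p+1}/(β − p)) · p·∫₀^∞ t^{p-1} o(t) dt`. -/
theorem stmt_6 (a o : ℝ → ℝ) (ha_meas : Measurable a) (ho_meas : Measurable o)
    (ha_range : ∀ t, 0 ≤ t → a t ∈ Set.Icc (0 : ℝ) 1)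
    (ho_range : ∀ t, 0 ≤ t → o t ∈ Set.Icc (0 : ℝ) 1)
    (ha_mono : ∀ s t, 0 ≤ s → s ≤ t → a t ≤ a s)
    (ho_mono : ∀ s t, 0 ≤ s → s ≤ t → o t ≤ o s)
    (T : ℝ) (hT : 0 < T) (ha_supp : ∀ t, T ≤ t → a t = 0) (ho_supp : ∀ t, T ≤ t → o t = 0)
    (p L β : ℝ) (hp : 1 ≤ p) (hL : 1 ≤ L) (hβ : p < β)
    (hkey : ∀ i : ℝ, 0 ≤ i →
      L * β * ∫ t in Set.Ioi i, (a t - o (t / (L * β))) / t ≤ L * a i) :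
    p * ∫ t in Set.Ioi (0 : ℝ), t ^ (p - 1) * a t ≤
      (L ^ p * β ^ (p + 1) / (β - p)) * (p * ∫ t in Set.Ioi (0 : ℝ), t ^ (p - 1) * o t) :=
  stmt_6_general a o ha_meas ho_meas ha_range ho_range T ha_supp ho_supp p L β hp hL hβ hkey
end

section
/- Among all binary trees with exactly m leaves (each internal node having two children), a tree minimizing the sum of p-th powers of the leaf depths (for any fixed real p ≥ 1) has the property that the maximum leaf depth exceeds the minimum leaf depth by at most one. -/
/-- Rooted binary trees in which every internal node has exactly two children. -/
inductive BTree : Type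
  | leaf : BTree
  | node : BTree → BTree → BTree

/-- The multiset of depths of the leaves of a binary tree (the root has depth 0). -/
def BTree.leafDepths : BTree → Multiset ℕ
  | .leaf => {0}
  | .node l r => (l.leafDepths.map (· + 1)) + (r.leafDepths.map (· + 1))

/-- The sum of `p`-th powers of the leaf depths of a binary tree. -/
noncomputable def BTree.Dp (T : BTree) (p : ℝ) : ℝ :=
  (T.leafDepths.map (fun d => (d : ℝ) ^ p)).sum

lemma BTree.leafDepths_ne_zero : ∀ T : BTree, T.leafDepths ≠ 0
  | .leaf => by simp [BTree.leafDepths]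
  | .node l r => by
    simp only [BTree.leafDepths, ne_eq]
    intro h
    have h1 : l.leafDepths.map (· + 1) = 0 :=
      le_antisymm (h ▸ Multiset.le_add_right _ _) (Multiset.zero_le _)
    exact (BTree.leafDepths_ne_zero l) (Multiset.map_eq_zero.mp h1)

lemma BTree.eq_leaf_of_all_zero (T : BTree) (h : ∀ x ∈ T.leafDepths, x = 0) :
    T = .leaf := by
  cases T with
  | leaf => rfl
  | node l r =>
    obtain ⟨y, hy⟩ := Multiset.exists_mem_of_ne_zero (BTree.leafDepths_ne_zero l)
    have : y + 1 ∈ (BTree.node l r).leafDepths := by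
      simp only [BTree.leafDepths, Multiset.mem_add, Multiset.mem_map]
      exact Or.inl ⟨y, hy, rfl⟩
    exact absurd (h _ this) (by simp)

/-- Splitting a leaf at depth `a` into an internal node with two leaf children. -/
lemma BTree.split (T : BTree) (a : ℕ) (ha : a ∈ T.leafDepths) :
    ∃ T' : BTree, T'.leafDepths + {a} = T.leafDepths + {a + 1, a + 1} := by
  induction T generalizing a with
  | leaf =>
    have : a = 0 := by simpa [BTree.leafDepths] using ha
    subst this
    refine ⟨.node .leaf .leaf, ?_⟩
    simp [BTree.leafDepths]
    decide
  | node l r ihl ihr =>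
    simp only [BTree.leafDepths, Multiset.mem_add, Multiset.mem_map] at ha
    rcases ha with ⟨x, hx, rfl⟩ | ⟨x, hx, rfl⟩
    · obtain ⟨l', hl'⟩ := ihl x hx
      refine ⟨.node l' r, ?_⟩
      have := congrArg (Multiset.map (· + 1)) hl'
      simp only [Multiset.map_add] at this
      simp only [BTree.leafDepths]
      calc l'.leafDepths.map (· + 1) + r.leafDepths.map (· + 1) + {x + 1}
          = l'.leafDepths.map (· + 1) + Multiset.map (· + 1) {x} + r.leafDepths.map (· + 1) := by
            simp; ring_nf; simp [add_comm, add_left_comm, add_assoc]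
        _ = (l.leafDepths.map (· + 1) + Multiset.map (· + 1) {x + 1, x + 1}) + r.leafDepths.map (· + 1) := by rw [this]
        _ = l.leafDepths.map (· + 1) + r.leafDepths.map (· + 1) + {x + 1 + 1, x + 1 + 1} := by
            simp [Multiset.insert_eq_cons]; ring_nf; simp [add_comm, add_left_comm, add_assoc]
    · obtain ⟨r', hr'⟩ := ihr x hx
      refine ⟨.node l r', ?_⟩
      have := congrArg (Multiset.map (· + 1)) hr'
      simp only [Multiset.map_add] at this
      simp only [BTree.leafDepths]
      calc l.leafDepths.map (· + 1) + r'.leafDepths.map (· + 1) + {x + 1}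
          = l.leafDepths.map (· + 1) + (r'.leafDepths.map (· + 1) + Multiset.map (· + 1) {x}) := by
            simp [add_assoc]
        _ = l.leafDepths.map (· + 1) + (r.leafDepths.map (· + 1) + Multiset.map (· + 1) {x + 1, x + 1}) := by rw [this]
        _ = l.leafDepths.map (· + 1) + r.leafDepths.map (· + 1) + {x + 1 + 1, x + 1 + 1} := by
            simp [Multiset.insert_eq_cons, add_assoc]

/-- Merging a deepest sibling pair of leaves (at maximal depth `b+1`). -/
lemma BTree.merge (T : BTree) (b : ℕ) (hb : b + 1 ∈ T.leafDepths)
    (hmax : ∀ x ∈ T.leafDepths, x ≤ b + 1) :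
    ∃ T' : BTree, T'.leafDepths + {b + 1, b + 1} = T.leafDepths + {b} := by
  induction T generalizing b with
  | leaf => simp [BTree.leafDepths] at hb
  | node l r ihl ihr =>
    simp only [BTree.leafDepths, Multiset.mem_add, Multiset.mem_map] at hb
    cases b with
    | zero =>
      -- all depths equal 1, hence l = r = leaf
      have hl : l = .leaf := by
        apply BTree.eq_leaf_of_all_zero
        intro x hx
        have : x + 1 ≤ 1 := hmax (x + 1) (by
          simp only [BTree.leafDepths, Multiset.mem_add, Multiset.mem_map]
          exact Or.inl ⟨x, hx, rfl⟩)
        omega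
      have hr : r = .leaf := by
        apply BTree.eq_leaf_of_all_zero
        intro x hx
        have : x + 1 ≤ 1 := hmax (x + 1) (by
          simp only [BTree.leafDepths, Multiset.mem_add, Multiset.mem_map]
          exact Or.inr ⟨x, hx, rfl⟩)
        omega
      subst hl; subst hr
      refine ⟨.leaf, ?_⟩
      simp [BTree.leafDepths, Multiset.insert_eq_cons]
      decide
    | succ c =>
      rcases hb with ⟨x, hx, hx1⟩ | ⟨x, hx, hx1⟩
      · have hxc : x = c + 1 := by omega
        subst hxc
        obtain ⟨l', hl'⟩ := ihl c hx (fun y hy => by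
          have : y + 1 ≤ c + 1 + 1 := hmax (y + 1) (by
            simp only [BTree.leafDepths, Multiset.mem_add, Multiset.mem_map]
            exact Or.inl ⟨y, hy, rfl⟩)
          omega)
        refine ⟨.node l' r, ?_⟩
        have := congrArg (Multiset.map (· + 1)) hl'
        simp only [Multiset.map_add] at this
        simp only [BTree.leafDepths]
        calc l'.leafDepths.map (· + 1) + r.leafDepths.map (· + 1) + {c + 1 + 1, c + 1 + 1}
            = l'.leafDepths.map (· + 1) + Multiset.map (· + 1) {c + 1, c + 1} + r.leafDepths.map (· + 1) := by
              simp [Multiset.insert_eq_cons]; ring_nf; simp [add_comm, add_left_comm, add_assoc]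
          _ = (l.leafDepths.map (· + 1) + Multiset.map (· + 1) {c}) + r.leafDepths.map (· + 1) := by rw [this]
          _ = l.leafDepths.map (· + 1) + r.leafDepths.map (· + 1) + {c + 1} := by
              simp; ring_nf; simp [add_comm, add_left_comm, add_assoc]
      · have hxc : x = c + 1 := by omega
        subst hxc
        obtain ⟨r', hr'⟩ := ihr c hx (fun y hy => by
          have : y + 1 ≤ c + 1 + 1 := hmax (y + 1) (by
            simp only [BTree.leafDepths, Multiset.mem_add, Multiset.mem_map]
            exact Or.inr ⟨y, hy, rfl⟩)
          omega)
        refine ⟨.node l r', ?_⟩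
        have := congrArg (Multiset.map (· + 1)) hr'
        simp only [Multiset.map_add] at this
        simp only [BTree.leafDepths]
        calc l.leafDepths.map (· + 1) + r'.leafDepths.map (· + 1) + {c + 1 + 1, c + 1 + 1}
            = l.leafDepths.map (· + 1) + (r'.leafDepths.map (· + 1) + Multiset.map (· + 1) {c + 1, c + 1}) := by
              simp [Multiset.insert_eq_cons, add_assoc]
          _ = l.leafDepths.map (· + 1) + (r.leafDepths.map (· + 1) + Multiset.map (· + 1) {c}) := by rw [this]
          _ = l.leafDepths.map (· + 1) + r.leafDepths.map (· + 1) + {c + 1} := by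
              simp [add_assoc]

lemma BTree.Dp_eq (T : BTree) (p : ℝ) :
    T.Dp p = (Multiset.map (fun d : ℕ => (d : ℝ) ^ p) T.leafDepths).sum := by
  unfold BTree.Dp
  simp only [bind, Multiset.bind, Multiset.join, Multiset.map_map, pure, Multiset.pure_def]
  have h : (Multiset.map (fun x : ℕ => ({(x : ℝ)} : Multiset ℝ)) T.leafDepths).sum
      = T.leafDepths.map (fun x : ℕ => (x : ℝ)) := by
    induction T.leafDepths using Multiset.induction with
    | empty => simp
    | cons a s ih => simp [ih]
  rw [h, Multiset.map_map]
  rfl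

/-- Every nonempty multiset of naturals has a maximal element. -/
lemma Multiset.exists_max_nat (s : Multiset ℕ) (hs : s ≠ 0) :
    ∃ b ∈ s, ∀ x ∈ s, x ≤ b := by
  induction s using Multiset.induction with
  | empty => exact absurd rfl hs
  | cons a s ih =>
    by_cases h : s = 0
    · subst h; exact ⟨a, by simp, by simp⟩
    · obtain ⟨b, hbmem, hbmax⟩ := ih h
      refine ⟨max a b, ?_, ?_⟩
      · rcases le_total a b with h' | h'
        · simp [max_eq_right h', Multiset.mem_cons_of_mem hbmem]
        · simp [max_eq_left h']
      · intro x hx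
        rcases Multiset.mem_cons.mp hx with rfl | hx'
        · exact le_max_left _ _
        · exact le_trans (hbmax x hx') (le_max_right _ _)

/-- The key convexity inequality. -/
lemma key_ineq (p : ℝ) (hp : 1 ≤ p) (a c : ℕ) (hac : a + 1 ≤ c) :
    ((c : ℝ)) ^ p + 2 * ((a : ℝ) + 1) ^ p < ((a : ℝ)) ^ p + 2 * ((c : ℝ) + 1) ^ p := by
  set x : ℝ := (a : ℝ) with hxdef
  set y : ℝ := (c : ℝ) with hydef
  have hx0 : (0:ℝ) ≤ x := Nat.cast_nonneg a
  have hy0 : (0:ℝ) ≤ y := Nat.cast_nonneg c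
  have hxy : x + 1 ≤ y := by
    have := (Nat.cast_le (α := ℝ)).mpr hac
    push_cast at this; linarith
  have hp0 : (0:ℝ) < p := lt_of_lt_of_le one_pos hp
  -- convexity: 2 * (x+1)^p ≤ x^p + (x+2)^p
  have hconv : 2 * (x + 1) ^ p ≤ x ^ p + (x + 2) ^ p := by
    have h := (convexOn_rpow hp).2 (Set.mem_Ici.mpr hx0)
      (Set.mem_Ici.mpr (by linarith : (0:ℝ) ≤ x + 2))
      (by norm_num : (0:ℝ) ≤ (1/2 : ℝ)) (by norm_num : (0:ℝ) ≤ (1/2 : ℝ)) (by norm_num)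
    simp only [smul_eq_mul] at h
    have heq : (1/2 : ℝ) * x + (1/2 : ℝ) * (x + 2) = x + 1 := by ring
    rw [heq] at h
    linarith
  have hmono : (x + 2) ^ p ≤ (y + 1) ^ p :=
    Real.rpow_le_rpow (by linarith) (by linarith) (le_of_lt hp0)
  have hstrict : y ^ p < (y + 1) ^ p :=
    Real.rpow_lt_rpow hy0 (by linarith) hp0
  linarith

/-- Among all binary trees with exactly `m ≥ 2` leaves, a tree minimizing the sum of `p`-th
powers of the leaf depths (`p ≥ 1`) has max leaf depth exceeding min leaf depth by at most 1. -/
theorem stmt_10 (p : ℝ) (hp : 1 ≤ p) (m : ℕ) (hm : 2 ≤ m) (T : BTree)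
    (hcard : Multiset.card T.leafDepths = m)
    (hopt : ∀ T' : BTree, Multiset.card T'.leafDepths = m → T.Dp p ≤ T'.Dp p) :
    ∀ d₁ ∈ T.leafDepths, ∀ d₂ ∈ T.leafDepths, d₂ ≤ d₁ + 1 := by
  intro d₁ hd₁ d₂ hd₂
  by_contra hcon
  push_neg at hcon
  -- get a maximal depth b, with b ≥ d₁ + 2
  obtain ⟨b, hbmem, hbmax⟩ := Multiset.exists_max_nat T.leafDepths (BTree.leafDepths_ne_zero T)
  have hd2b : d₂ ≤ b := hbmax d₂ hd₂
  have hb2 : d₁ + 2 ≤ b := by omega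
  obtain ⟨c, rfl⟩ : ∃ c, b = c + 1 := ⟨b - 1, by omega⟩
  -- merge at the deepest level
  obtain ⟨T₁, hT₁⟩ := BTree.merge T c hbmem hbmax
  -- d₁ is still in T₁
  have hd₁T₁ : d₁ ∈ T₁.leafDepths := by
    have hcount := congrArg (Multiset.count d₁) hT₁
    simp only [Multiset.count_add] at hcount
    have h1 : Multiset.count d₁ ({c + 1, c + 1} : Multiset ℕ) = 0 := by
      rw [Multiset.count_eq_zero]
      simp only [Multiset.insert_eq_cons, Multiset.mem_cons, Multiset.mem_singleton]
      omega
    have h2 : 1 ≤ Multiset.count d₁ T.leafDepths := Multiset.one_le_count_iff_mem.mpr hd₁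
    rw [← Multiset.one_le_count_iff_mem]
    omega
  -- split at depth d₁
  obtain ⟨T₂, hT₂⟩ := BTree.split T₁ d₁ hd₁T₁
  -- combined multiset identity
  have hcomb : T₂.leafDepths + ({d₁} + {c + 1, c + 1}) =
      T.leafDepths + ({c} + {d₁ + 1, d₁ + 1}) := by
    calc T₂.leafDepths + ({d₁} + {c + 1, c + 1})
        = (T₂.leafDepths + {d₁}) + {c + 1, c + 1} := by rw [add_assoc]
      _ = (T₁.leafDepths + {d₁ + 1, d₁ + 1}) + {c + 1, c + 1} := by rw [hT₂]
      _ = (T₁.leafDepths + {c + 1, c + 1}) + {d₁ + 1, d₁ + 1} := by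
          rw [add_assoc, add_assoc, add_comm ({d₁ + 1, d₁ + 1} : Multiset ℕ)]
      _ = (T.leafDepths + {c}) + {d₁ + 1, d₁ + 1} := by rw [hT₁]
      _ = T.leafDepths + ({c} + {d₁ + 1, d₁ + 1}) := by rw [add_assoc]
  -- cardinality is preserved
  have hcard₂ : Multiset.card T₂.leafDepths = m := by
    have := congrArg Multiset.card hcomb
    simp only [Multiset.card_add, Multiset.insert_eq_cons, Multiset.card_cons,
      Multiset.card_singleton] at this
    omega
  -- Dp comparison
  have hDp := congrArg (fun s => (Multiset.map (fun d : ℕ => (d : ℝ) ^ p) s).sum) hcomb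
  simp only [Multiset.map_add, Multiset.sum_add, Multiset.insert_eq_cons,
    Multiset.map_cons, Multiset.map_singleton, Multiset.sum_cons,
    Multiset.sum_singleton] at hDp
  have hkey := key_ineq p hp d₁ c (by omega)
  have hDpT₂ : T₂.Dp p < T.Dp p := by
    push_cast at hDp
    rw [BTree.Dp_eq, BTree.Dp_eq]
    linarith [hDp, hkey]
  exact absurd (hopt T₂ hcard₂) (not_le.mpr hDpT₂)
end

section
/- Let f: Set(E × Ω) → ℝ≥0 be defined over partial realizations of independent random items, where f(ψ) = min(f̂(ψ), Q) for a monotone submodular set function f̂ on E × Ω and Q > 0. Then f is adaptive submodular with respect to the product distribution: for all partial realizations ψ ⊆ ψ′ and items e ∉ dom(ψ′), the conditional expected marginal benefit satisfies Δ(e|ψ) ≥ Δ(e|ψ′). -/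
/-- With independent items, the truncation `f = min(f̂, Q)` of a monotone submodular set
function `f̂` on `E × Ω` is adaptive submodular w.r.t. the product distribution: for partial
realizations `ψ ⊆ ψ'` and any item `e ∉ dom(ψ')`, `Δ(e|ψ) ≥ Δ(e|ψ')`, where (by independence)
`Δ(e|ψ) = ∑_ω μ_e(ω) · (f(ψ ∪ {(e,ω)}) − f(ψ))`. -/
theorem stmt_12 {E Ω : Type*} [Fintype E] [Fintype Ω] [DecidableEq E] [DecidableEq Ω]
    (fhat : Finset (E × Ω) → ℝ) (Q : ℝ) (hQ : 0 < Q)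
    (hmono : ∀ A B : Finset (E × Ω), A ⊆ B → fhat A ≤ fhat B)
    (hsub : ∀ A B : Finset (E × Ω), A ⊆ B → ∀ x ∉ B,
      fhat (insert x B) - fhat B ≤ fhat (insert x A) - fhat A)
    (μ : E → Ω → ℝ) (hμ0 : ∀ e ω, 0 ≤ μ e ω) (hμ1 : ∀ e, ∑ ω : Ω, μ e ω = 1)
    (ψ ψ' : Finset (E × Ω)) (hsubr : ψ ⊆ ψ')
    (hvalid : ∀ e : E, ∀ ω ω' : Ω, (e, ω) ∈ ψ' → (e, ω') ∈ ψ' → ω = ω')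
    (e : E) (he : ∀ ω : Ω, (e, ω) ∉ ψ') :
    ∑ ω : Ω, μ e ω * (min (fhat (insert (e, ω) ψ')) Q - min (fhat ψ') Q) ≤
      ∑ ω : Ω, μ e ω * (min (fhat (insert (e, ω) ψ)) Q - min (fhat ψ) Q) := by
  apply Finset.sum_le_sum
  intro ω _
  apply mul_le_mul_of_nonneg_left _ (hμ0 e ω)
  set a := fhat ψ
  set b := fhat ψ'
  set c := fhat (insert (e, ω) ψ)
  set d := fhat (insert (e, ω) ψ')
  have hab : a ≤ b := hmono _ _ hsubr
  have hac : a ≤ c := hmono _ _ (Finset.subset_insert _ _)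
  have hbd : b ≤ d := hmono _ _ (Finset.subset_insert _ _)
  have hkey : d - b ≤ c - a := hsub ψ ψ' hsubr (e, ω) (he ω)
  rcases le_total Q b with h | h
  · have h1 : min b Q = Q := min_eq_right h
    have h2 : min a Q ≤ min c Q := min_le_min hac le_rfl
    have h3 : min d Q ≤ Q := min_le_right _ _
    linarith
  · have h1 : min b Q = b := min_eq_left h
    have h0 : min a Q = a := min_eq_left (hab.trans h)
    rcases le_total Q c with h2 | h2
    · have h3 : min c Q = Q := min_eq_right h2
      have h4 : min d Q ≤ Q := min_le_right _ _
      linarith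
    · have h3 : min c Q = c := min_eq_left h2
      have h4 : min d Q ≤ d := min_le_left _ _
      have h5 : b ≤ min d Q := le_min hbd h
      linarith
end

section
/- Suppose a function f on partial realizations is adaptive submodular with respect to a distribution p(·), i.e., Δ(e|ψ) ≥ Δ(e|ψ′) for all ψ ≼ ψ′ and e ∉ dom(ψ′). Then for any partial realization ψ with f(ψ) < Q and any finite sequence of selections made by an arbitrary policy conditioned on ψ ≼ Φ, the expected total increase E[f(ψ ∪ P∞) − f(ψ) | ψ ≼ Φ] is at most ∑_{e ∈ E \ dom(ψ)} c_e · P(ψ ≼ Φ ∧ e selected | ψ ≼ Φ) · max_{e′} Δ(e′|ψ)/c_{e′}. -/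
/-!
Telescope `f (ψ ∪ P∞) - f ψ` along the steps of the policy. Given the history `s` observed before
a step, the realization is distributed as `Φ` conditioned on `ψ ∪ s`, so the expected increment of
the step is `Δ(e | ψ ∪ s) ≤ Δ(e | ψ) ≤ c e * max_{e'} Δ(e' | ψ) / c e'` by adaptive
submodularity when the selected item `e` is new, and `0` otherwise. Along each run these charges
add up to the costs of the new items selected, and exchanging the order of summation turns the
expectation of that sum into the selection probabilities.
-/

namespace Stmt18

variable {E Ω : Type*} [Fintype E] [Fintype Ω] [DecidableEq E] [DecidableEq Ω]

/-- A full realization `φ : E → Ω` is consistent with the partial realization `ψ`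
(written `ψ ≼ φ`) if every observed pair in `ψ` agrees with `φ`. -/
def Consistent (ψ : Finset (E × Ω)) (φ : E → Ω) : Prop := ∀ p ∈ ψ, φ p.1 = p.2

instance (ψ : Finset (E × Ω)) (φ : E → Ω) : Decidable (Consistent ψ φ) := by
  unfold Consistent; infer_instance

/-- Probability that a random full realization (with distribution `pr`) is consistent with `ψ`. -/
def probCons (pr : (E → Ω) → ℝ) (ψ : Finset (E × Ω)) : ℝ :=
  ∑ φ ∈ Finset.univ.filter (Consistent ψ), pr φ

/-- Conditional expected marginal benefit `Δ(e|ψ)` of item `e` given the partial realization `ψ`. -/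
noncomputable def condDelta (pr : (E → Ω) → ℝ) (f : Finset (E × Ω) → ℝ)
    (e : E) (ψ : Finset (E × Ω)) : ℝ :=
  (∑ φ ∈ Finset.univ.filter (Consistent ψ),
      pr φ * (f (insert (e, φ e) ψ) - f ψ)) / probCons pr ψ

/-- The partial realization observed after `n` steps of running the policy `pol` (which maps an
observed partial realization to the next selected item, or `none` to stop) under realization `φ`. -/
def run (pol : Finset (E × Ω) → Option E) (φ : E → Ω) : ℕ → Finset (E × Ω)
  | 0 => ∅
  | n + 1 =>
    let s := run pol φ n
    match pol s with
    | none => s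
    | some e => insert (e, φ e) s

/-- All pairs observed by the policy `pol` under realization `φ` (it selects at most `|E×Ω|`
distinct pairs, so the run stabilizes by that time). -/
def Pinf (pol : Finset (E × Ω) → Option E) (φ : E → Ω) : Finset (E × Ω) :=
  run pol φ (Fintype.card E * Fintype.card Ω + 1)

end Stmt18

namespace Stmt18

section Run

variable {E Ω : Type*} [DecidableEq E] [DecidableEq Ω]
  (pol : Finset (E × Ω) → Option E) (φ : E → Ω)

lemma run_succ_of_eq_none {n : ℕ} (h : pol (run pol φ n) = none) :
    run pol φ (n + 1) = run pol φ n := by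
  simp only [run, h]

lemma run_succ_of_eq_some {n : ℕ} {e : E} (h : pol (run pol φ n) = some e) :
    run pol φ (n + 1) = insert (e, φ e) (run pol φ n) := by
  simp only [run, h]

lemma run_mono : Monotone (run pol φ) := by
  refine monotone_nat_of_le_succ fun n => ?_
  rcases hpol : pol (run pol φ n) with _ | e
  · rw [run_succ_of_eq_none pol φ hpol]
  · rw [run_succ_of_eq_some pol φ hpol]
    exact Finset.subset_insert _ _

lemma run_consistent (n : ℕ) : Consistent (run pol φ n) φ := by
  induction n with
  | zero => simp [run, Consistent]
  | succ n ih =>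
    rcases hpol : pol (run pol φ n) with _ | e
    · rwa [run_succ_of_eq_none pol φ hpol]
    · rw [run_succ_of_eq_some pol φ hpol]
      intro p hp
      rcases Finset.mem_insert.1 hp with rfl | hp
      exacts [rfl, ih p hp]

lemma run_eq_of_consistent {φ' : E → Ω} {n : ℕ} (h : Consistent (run pol φ n) φ') :
    ∀ k ≤ n, run pol φ' k = run pol φ k
  | 0, _ => rfl
  | k + 1, hk => by
    have ih := run_eq_of_consistent h k (by omega)
    rcases hpol : pol (run pol φ k) with _ | e
    · rw [run_succ_of_eq_none pol φ hpol, run_succ_of_eq_none pol φ' (ih ▸ hpol), ih]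
    · have hmem : (e, φ e) ∈ run pol φ n := run_mono pol φ hk <| by
        rw [run_succ_of_eq_some pol φ hpol]
        exact Finset.mem_insert_self _ _
      rw [run_succ_of_eq_some pol φ hpol, run_succ_of_eq_some pol φ' (ih ▸ hpol), ih, h _ hmem]

lemma run_eq_iff_consistent {φ' : E → Ω} {n : ℕ} :
    run pol φ' n = run pol φ n ↔ Consistent (run pol φ n) φ' :=
  ⟨fun h => h ▸ run_consistent pol φ' n, fun h => run_eq_of_consistent pol φ h n le_rfl⟩

end Run

section Consistency

variable {E Ω : Type*}

lemma consistent_union [DecidableEq E] [DecidableEq Ω] {ψ ψ' : Finset (E × Ω)} {φ : E → Ω} :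
    Consistent (ψ ∪ ψ') φ ↔ Consistent ψ φ ∧ Consistent ψ' φ := by
  simp only [Consistent, Finset.mem_union, or_imp, forall_and]

lemma Consistent.mem_of_mem_image_fst [DecidableEq E] {ψ : Finset (E × Ω)} {φ : E → Ω}
    (h : Consistent ψ φ) {e : E} (he : e ∈ ψ.image Prod.fst) : (e, φ e) ∈ ψ := by
  obtain ⟨p, hp, rfl⟩ := Finset.mem_image.1 he
  rwa [h p hp]

end Consistency

def charge {E Ω : Type*} [DecidableEq E] [DecidableEq Ω] (pol : Finset (E × Ω) → Option E)
    (ψ : Finset (E × Ω)) (r : E → ℝ) (s : Finset (E × Ω)) : ℝ :=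
  match pol s with
  | none => 0
  | some e => if e ∈ (ψ ∪ s).image Prod.fst then 0 else r e

section Charge

variable {E Ω : Type*} [DecidableEq E] [DecidableEq Ω]
  (pol : Finset (E × Ω) → Option E) (ψ : Finset (E × Ω)) (r : E → ℝ) (φ : E → Ω)

lemma sum_sdiff_image_run_succ (n : ℕ) :
    ∑ e ∈ (ψ ∪ run pol φ (n + 1)).image Prod.fst \ ψ.image Prod.fst, r e =
      ∑ e ∈ (ψ ∪ run pol φ n).image Prod.fst \ ψ.image Prod.fst, r e +
        charge pol ψ r (run pol φ n) := by
  rcases hpol : pol (run pol φ n) with _ | e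
  · simp [run_succ_of_eq_none pol φ hpol, charge, hpol]
  · rw [run_succ_of_eq_some pol φ hpol, Finset.union_insert, Finset.image_insert]
    by_cases he : e ∈ (ψ ∪ run pol φ n).image Prod.fst
    · simp [he, charge, hpol]
    · have he' : e ∉ ψ.image Prod.fst := fun h =>
        he (Finset.image_subset_image Finset.subset_union_left h)
      rw [Finset.insert_sdiff_of_notMem _ he', Finset.sum_insert (by simp [he])]
      simp [charge, hpol, he, add_comm]

lemma sum_range_charge (N : ℕ) :
    ∑ i ∈ Finset.range N, charge pol ψ r (run pol φ i) =
      ∑ e ∈ (ψ ∪ run pol φ N).image Prod.fst \ ψ.image Prod.fst, r e := by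
  induction N with
  | zero => simp [run]
  | succ N ih => rw [Finset.sum_range_succ, ih, sum_sdiff_image_run_succ]

end Charge

section Exchange

variable {ι E Ω : Type*} [Fintype ι] [Fintype E] [Fintype Ω] [DecidableEq E] [DecidableEq Ω]

lemma sum_mul_sum_sdiff_image_fst (P : ι → Prop) [DecidablePred P] (w : ι → ℝ)
    (t : ι → Finset (E × Ω)) (ψ : Finset (E × Ω)) (r : E → ℝ) :
    ∑ x ∈ Finset.univ.filter P, w x * ∑ e ∈ (ψ ∪ t x).image Prod.fst \ ψ.image Prod.fst, r e =
      ∑ e ∈ Finset.univ.filter (fun e : E => ∀ ω : Ω, (e, ω) ∉ ψ),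
        (∑ x ∈ Finset.univ.filter (fun x => P x ∧ ∃ ω : Ω, (e, ω) ∈ t x), w x) * r e := by
  simp_rw [Finset.mul_sum, Finset.sum_mul]
  refine Finset.sum_comm' fun x e => ?_
  simp only [Finset.mem_filter, Finset.mem_univ, true_and, Finset.mem_sdiff, Finset.mem_image,
    Finset.mem_union, Prod.exists, exists_and_right, exists_eq_right, not_exists, exists_or]
  grind

end Exchange

variable {E Ω : Type*} [Fintype E] [Fintype Ω] [DecidableEq E] [DecidableEq Ω]
  (pr : (E → Ω) → ℝ) (f : Finset (E × Ω) → ℝ) (ψ : Finset (E × Ω))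

lemma probCons_nonneg (hpr0 : ∀ φ, 0 ≤ pr φ) : 0 ≤ probCons pr ψ :=
  Finset.sum_nonneg fun φ _ => hpr0 φ

lemma sum_mul_increment_eq_condDelta_mul (hpr0 : ∀ φ, 0 ≤ pr φ) (e : E) :
    ∑ φ ∈ Finset.univ.filter (Consistent ψ), pr φ * (f (insert (e, φ e) ψ) - f ψ) =
      condDelta pr f e ψ * probCons pr ψ := by
  by_cases h : probCons pr ψ = 0
  · have hzero := (Finset.sum_eq_zero_iff_of_nonneg fun φ _ => hpr0 φ).1 h
    rw [h, mul_zero]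
    exact Finset.sum_eq_zero fun φ hφ => by rw [hzero φ hφ, zero_mul]
  · exact (div_mul_cancel₀ _ h).symm

variable (pol : Finset (E × Ω) → Option E)

lemma filter_run_eq_eq_filter_consistent (φ₀ : E → Ω) (i : ℕ) :
    {φ ∈ Finset.univ.filter (Consistent ψ) | run pol φ i = run pol φ₀ i} =
      Finset.univ.filter (Consistent (ψ ∪ run pol φ₀ i)) := by
  ext φ
  simp only [Finset.mem_filter, Finset.mem_univ, true_and, consistent_union,
    run_eq_iff_consistent]

lemma sum_fiber_increment_eq (φ₀ : E → Ω) (i : ℕ) (hpr0 : ∀ φ, 0 ≤ pr φ) {e : E}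
    (hpol : pol (run pol φ₀ i) = some e) :
    ∑ φ ∈ Finset.univ.filter (Consistent ψ) with run pol φ i = run pol φ₀ i,
        pr φ * (f (ψ ∪ run pol φ (i + 1)) - f (ψ ∪ run pol φ i)) =
      condDelta pr f e (ψ ∪ run pol φ₀ i) * probCons pr (ψ ∪ run pol φ₀ i) := by
  rw [← sum_mul_increment_eq_condDelta_mul pr f _ hpr0 e,
    ← filter_run_eq_eq_filter_consistent]
  refine Finset.sum_congr rfl fun φ hφ => ?_
  have hrun : run pol φ i = run pol φ₀ i := (Finset.mem_filter.1 hφ).2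
  rw [run_succ_of_eq_some pol φ (hrun ▸ hpol), hrun, Finset.union_insert]

lemma sum_fiber_increment_le (hpr0 : ∀ φ, 0 ≤ pr φ) {r : E → ℝ}
    (hr : ∀ e s, e ∉ (ψ ∪ s).image Prod.fst → condDelta pr f e (ψ ∪ s) ≤ r e)
    (i : ℕ) (s : Finset (E × Ω)) :
    ∑ φ ∈ Finset.univ.filter (Consistent ψ) with run pol φ i = s,
        pr φ * (f (ψ ∪ run pol φ (i + 1)) - f (ψ ∪ run pol φ i)) ≤
      ∑ φ ∈ Finset.univ.filter (Consistent ψ) with run pol φ i = s,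
        pr φ * charge pol ψ r (run pol φ i) := by
  rcases Finset.eq_empty_or_nonempty
    ((Finset.univ.filter (Consistent ψ)).filter (run pol · i = s)) with hF | ⟨φ₀, hφ₀⟩
  · simp [hF]
  obtain rfl : run pol φ₀ i = s := (Finset.mem_filter.1 hφ₀).2
  have hfiber : ∀ φ ∈ (Finset.univ.filter (Consistent ψ)).filter (run pol · i = run pol φ₀ i),
      Consistent (ψ ∪ run pol φ₀ i) φ ∧ run pol φ i = run pol φ₀ i := by
    intro φ hφ
    simp only [Finset.mem_filter, Finset.mem_univ, true_and] at hφ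
    exact ⟨hφ.2 ▸ consistent_union.2 ⟨hφ.1, run_consistent pol φ i⟩, hφ.2⟩
  rcases hpol : pol (run pol φ₀ i) with _ | e
  · refine (Finset.sum_congr rfl fun φ hφ => ?_).le
    obtain ⟨-, hrun⟩ := hfiber φ hφ
    simp [run_succ_of_eq_none pol φ (hrun ▸ hpol), charge, hrun, hpol]
  by_cases he : e ∈ (ψ ∪ run pol φ₀ i).image Prod.fst
  · refine (Finset.sum_congr rfl fun φ hφ => ?_).le
    obtain ⟨hcons, hrun⟩ := hfiber φ hφ
    rw [run_succ_of_eq_some pol φ (hrun ▸ hpol), Finset.union_insert, hrun,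
      Finset.insert_eq_of_mem (hcons.mem_of_mem_image_fst he)]
    simp [charge, hpol, he]
  calc _ = condDelta pr f e (ψ ∪ run pol φ₀ i) * probCons pr (ψ ∪ run pol φ₀ i) :=
        sum_fiber_increment_eq pr f ψ pol φ₀ i hpr0 hpol
    _ ≤ r e * probCons pr (ψ ∪ run pol φ₀ i) :=
        mul_le_mul_of_nonneg_right (hr e _ he) (probCons_nonneg pr _ hpr0)
    _ = _ := by
        rw [probCons, ← filter_run_eq_eq_filter_consistent, Finset.mul_sum]
        refine Finset.sum_congr rfl fun φ hφ => ?_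
        simp [charge, (hfiber φ hφ).2, hpol, he, mul_comm]

lemma expected_gain_le (hpr0 : ∀ φ, 0 ≤ pr φ) {r : E → ℝ}
    (hr : ∀ e s, e ∉ (ψ ∪ s).image Prod.fst → condDelta pr f e (ψ ∪ s) ≤ r e) (N : ℕ) :
    ∑ φ ∈ Finset.univ.filter (Consistent ψ), pr φ * (f (ψ ∪ run pol φ N) - f ψ) ≤
      ∑ φ ∈ Finset.univ.filter (Consistent ψ),
        pr φ * ∑ e ∈ (ψ ∪ run pol φ N).image Prod.fst \ ψ.image Prod.fst, r e := by
  have htelescope : ∀ φ, f (ψ ∪ run pol φ N) - f ψ =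
      ∑ i ∈ Finset.range N, (f (ψ ∪ run pol φ (i + 1)) - f (ψ ∪ run pol φ i)) := by
    intro φ
    rw [Finset.sum_range_sub (fun i => f (ψ ∪ run pol φ i))]
    simp [run]
  calc _ = ∑ i ∈ Finset.range N, ∑ φ ∈ Finset.univ.filter (Consistent ψ),
          pr φ * (f (ψ ∪ run pol φ (i + 1)) - f (ψ ∪ run pol φ i)) := by
        simp_rw [htelescope, Finset.mul_sum]
        exact Finset.sum_comm
    _ ≤ ∑ i ∈ Finset.range N, ∑ φ ∈ Finset.univ.filter (Consistent ψ),
          pr φ * charge pol ψ r (run pol φ i) := by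
        refine Finset.sum_le_sum fun i _ => ?_
        rw [← Finset.sum_fiberwise _ (run pol · i), ← Finset.sum_fiberwise _ (run pol · i)]
        exact Finset.sum_le_sum fun s _ => sum_fiber_increment_le pr f ψ pol hpr0 hr i s
    _ = _ := by
        rw [Finset.sum_comm]
        simp_rw [← Finset.mul_sum, sum_range_charge]

theorem stmt_18_general [Nonempty E] (pr : (E → Ω) → ℝ) (hpr0 : ∀ φ, 0 ≤ pr φ)
    (f : Finset (E × Ω) → ℝ) (c : E → ℝ) (hc : ∀ e, 0 < c e)
    (hAS : ∀ ψ ψ' : Finset (E × Ω), ψ ⊆ ψ' → ∀ e : E, (∀ ω : Ω, (e, ω) ∉ ψ') →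
      condDelta pr f e ψ' ≤ condDelta pr f e ψ)
    (ψ : Finset (E × Ω))
    (pol : Finset (E × Ω) → Option E) :
    (∑ φ ∈ Finset.univ.filter (Consistent ψ),
        pr φ * (f (ψ ∪ Pinf pol φ) - f ψ)) / probCons pr ψ ≤
      ∑ e ∈ Finset.univ.filter (fun e : E => ∀ ω : Ω, (e, ω) ∉ ψ),
        c e *
          ((∑ φ ∈ Finset.univ.filter
              (fun φ => Consistent ψ φ ∧ ∃ ω : Ω, (e, ω) ∈ Pinf pol φ), pr φ) /
            probCons pr ψ) *
          (Finset.univ.sup' Finset.univ_nonempty (fun e' : E => condDelta pr f e' ψ / c e')) := by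
  set M := Finset.univ.sup' Finset.univ_nonempty (fun e' : E => condDelta pr f e' ψ / c e')
  have hr : ∀ e s, e ∉ (ψ ∪ s).image Prod.fst → condDelta pr f e (ψ ∪ s) ≤ c e * M := by
    intro e s he
    calc condDelta pr f e (ψ ∪ s) ≤ condDelta pr f e ψ :=
          hAS _ _ Finset.subset_union_left e fun ω h => he (Finset.mem_image_of_mem Prod.fst h)
      _ ≤ c e * M := by
          rw [mul_comm, ← div_le_iff₀ (hc e)]
          exact Finset.le_sup' (fun e' => condDelta pr f e' ψ / c e') (Finset.mem_univ e)
  have hgain := expected_gain_le pr f ψ pol hpr0 hr (Fintype.card E * Fintype.card Ω + 1)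
  rw [sum_mul_sum_sdiff_image_fst] at hgain
  unfold Pinf
  refine (div_le_div_of_nonneg_right hgain (probCons_nonneg pr ψ hpr0)).trans_eq ?_
  rw [Finset.sum_div]
  exact Finset.sum_congr rfl fun e _ => by ring

/-- If `f` is adaptive submodular w.r.t. `pr`, then for any partial realization `ψ` with
`f(ψ) < Q` and any policy, the expected total increase `E[f(ψ ∪ P∞) − f(ψ) | ψ ≼ Φ]` is
at most `∑_{e ∉ dom(ψ)} c_e · P(e selected | ψ ≼ Φ) · max_{e'} Δ(e'|ψ)/c_{e'}`. -/
theorem stmt_18 [Nonempty E] (pr : (E → Ω) → ℝ) (hpr0 : ∀ φ, 0 ≤ pr φ)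
    (hpr1 : ∑ φ : E → Ω, pr φ = 1)
    (f : Finset (E × Ω) → ℝ) (c : E → ℝ) (hc : ∀ e, 0 < c e) (Q : ℝ)
    (hAS : ∀ ψ ψ' : Finset (E × Ω), ψ ⊆ ψ' → ∀ e : E, (∀ ω : Ω, (e, ω) ∉ ψ') →
      condDelta pr f e ψ' ≤ condDelta pr f e ψ)
    (ψ : Finset (E × Ω)) (hfQ : f ψ < Q) (hψ : 0 < probCons pr ψ)
    (pol : Finset (E × Ω) → Option E) :
    (∑ φ ∈ Finset.univ.filter (Consistent ψ),
        pr φ * (f (ψ ∪ Pinf pol φ) - f ψ)) / probCons pr ψ ≤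
      ∑ e ∈ Finset.univ.filter (fun e : E => ∀ ω : Ω, (e, ω) ∉ ψ),
        c e *
          ((∑ φ ∈ Finset.univ.filter
              (fun φ => Consistent ψ φ ∧ ∃ ω : Ω, (e, ω) ∈ Pinf pol φ), pr φ) /
            probCons pr ψ) *
          (Finset.univ.sup' Finset.univ_nonempty (fun e' : E => condDelta pr f e' ψ / c e')) :=
  stmt_18_general pr hpr0 f c hc hAS ψ pol

end Stmt18
end
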